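/- Let φ: A → B be an injective homomorphism of finitely generated groups and let β: B → G be a homomorphism to a finite group G. Regard ℤ[G] as a B-module via left multiplication through β, and as an A-module via left multiplication through β ∘ φ. Then the induced maps φ_*: H_j(A; ℤ[G]) → H_j(B; ℤ[G]) are bijections for j = 0 and j = 1 if and only if the following two conditions hold: (1) the image of β ∘ φ: A → G equals the image of β: B → G, and (2) φ induces an isomorphism of groups A/[ker(β∘φ), ker(β∘φ)] → B/[ker(β), ker(β)]. -/

import Mathlib

noncomputable section

namespace FV

variable {A B : Type} [Group A] [Group B] {M : Type} [AddCommGroup M]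

/-- The group structure on `AddAut M` used by the older Mathlib (composition), which no longer
provides it as an instance (it is now an additive group). -/
instance addAutGroup (M : Type) [AddCommGroup M] : Group (AddAut M) where
  mul g h := AddEquiv.trans h g
  one := AddEquiv.refl _
  inv := AddEquiv.symm
  mul_assoc _ _ _ := rfl
  one_mul _ := rfl
  mul_one _ := rfl
  inv_mul_cancel := AddEquiv.self_trans_symm

/-- An action of the group `A` on the abelian group `M` by additive automorphisms,
i.e. a `ℤ[A]`-module structure on `M`. -/
abbrev Rep (A M : Type) [Group A] [AddCommGroup M] := A →* AddAut M

/-- The boundary map `C₁ → C₀` of the inhomogeneous chain complex computing the group homology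
of `A` with coefficients in `M`; on a generator `a ⊗ m` it is `a⁻¹ • m - m`. -/
def d1 (ρ : Rep A M) : (A →₀ M) →+ M :=
  Finsupp.liftAddHom fun a => (ρ a⁻¹).toAddMonoidHom - AddMonoidHom.id M

/-- The boundary map `C₂ → C₁`; on a generator `(a₁, a₂) ⊗ m` it is
`a₂ ⊗ a₁⁻¹ • m - (a₁a₂) ⊗ m + a₁ ⊗ m`. -/
def d2 (ρ : Rep A M) : (A × A →₀ M) →+ (A →₀ M) :=
  Finsupp.liftAddHom fun p => (Finsupp.singleAddHom p.2).comp (ρ p.1⁻¹).toAddMonoidHom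
    - Finsupp.singleAddHom (p.1 * p.2) + Finsupp.singleAddHom p.1

/-- Zeroth group homology `H₀(A; M)`, the coinvariants of the action. -/
abbrev H0 (ρ : Rep A M) := M ⧸ (d1 ρ).range

/-- One-cycles. -/
abbrev Z1 (ρ : Rep A M) : AddSubgroup (A →₀ M) := (d1 ρ).ker

/-- First group homology `H₁(A; M)`: one-cycles modulo one-boundaries. -/
abbrev H1 (ρ : Rep A M) := Z1 ρ ⧸ ((d2 ρ).range.addSubgroupOf (Z1 ρ))

lemma d1_comp (φ : A →* B) (ρ : Rep B M) :
    d1 (ρ.comp φ) = (d1 ρ).comp (Finsupp.mapDomain.addMonoidHom φ) := by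
  refine Finsupp.addHom_ext fun a m => ?_
  simp [d1, Finsupp.mapDomain.addMonoidHom_apply, Finsupp.mapDomain_single]

lemma d2_comp (φ : A →* B) (ρ : Rep B M) :
    (Finsupp.mapDomain.addMonoidHom φ).comp (d2 (ρ.comp φ))
      = (d2 ρ).comp (Finsupp.mapDomain.addMonoidHom (Prod.map φ φ)) := by
  refine Finsupp.addHom_ext fun p m => ?_
  simp only [AddMonoidHom.comp_apply, d2, Finsupp.liftAddHom_apply_single,
    AddMonoidHom.sub_apply, AddMonoidHom.add_apply, Finsupp.singleAddHom_apply, map_add, map_sub]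
  simp [Finsupp.mapDomain.addMonoidHom_apply, Finsupp.mapDomain_single]

/-- The map `H₀(A; M) → H₀(B; M)` induced by a homomorphism `φ : A → B`, where `A` acts on the
`B`-module `M` through `φ`. -/
def H0Map (φ : A →* B) (ρ : Rep B M) : H0 (ρ.comp φ) →+ H0 ρ :=
  QuotientAddGroup.map _ _ (AddMonoidHom.id M) (by
    rw [d1_comp φ ρ]
    rintro x ⟨y, rfl⟩
    exact ⟨Finsupp.mapDomain.addMonoidHom φ y, rfl⟩)

/-- The map on one-cycles induced by `φ`. -/
def Z1Map (φ : A →* B) (ρ : Rep B M) : Z1 (ρ.comp φ) →+ Z1 ρ :=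
  ((Finsupp.mapDomain.addMonoidHom φ).domRestrict (Z1 (ρ.comp φ))).codRestrict (Z1 ρ)
    (by
      rintro ⟨x, hx⟩
      have hx' : d1 (ρ.comp φ) x = 0 := hx
      rw [d1_comp φ ρ] at hx'
      exact hx')

/-- The map `H₁(A; M) → H₁(B; M)` induced by a homomorphism `φ : A → B`, where `A` acts on the
`B`-module `M` through `φ`. -/
def H1Map (φ : A →* B) (ρ : Rep B M) : H1 (ρ.comp φ) →+ H1 ρ :=
  QuotientAddGroup.map _ _ (Z1Map φ ρ) (by
    rintro ⟨x, hx⟩ hmem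
    obtain ⟨y, hy⟩ := hmem
    refine ⟨Finsupp.mapDomain.addMonoidHom (Prod.map φ φ) y, ?_⟩
    have h2 := DFunLike.congr_fun (d2_comp φ ρ) y
    simp only [AddMonoidHom.comp_apply] at h2
    rw [hy] at h2
    exact h2.symm)

/-- The permutation representation: `G` acting on the free abelian group `ℤ[X]` on a `G`-set
`X` by permuting basis elements. -/
def permRep (G X : Type) [Group G] [MulAction G X] : Rep G (X →₀ ℤ) where
  toFun g := Finsupp.domCongr (MulAction.toPerm g)
  map_one' := by
    ext f x
    simp
    rfl
  map_mul' g h := by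
    ext f x
    simp [mul_smul]
    rfl

end FV

namespace FV

variable {A B : Type} [Group A] [Group B]

/-- The map of left coset spaces `A/J → B/K` induced by a homomorphism `φ : A → B`
with `φ(J) ⊆ K`. -/
def cosetMap (φ : A →* B) (J : Subgroup A) (K : Subgroup B) (h : J ≤ K.comap φ) :
    A ⧸ J → B ⧸ K :=
  Quotient.map' φ fun a a' hr => by
    rw [QuotientGroup.leftRel_apply] at hr ⊢
    simpa using h hr

lemma commutator_comap_le (φ : A →* B) (K : Subgroup B) :
    ⁅K.comap φ, K.comap φ⁆ ≤ (⁅K, K⁆).comap φ := by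
  rw [← Subgroup.map_le_iff_le_comap, Subgroup.map_commutator]
  exact Subgroup.commutator_mono (Subgroup.map_comap_le φ K) (Subgroup.map_comap_le φ K)

end FV

namespace FV

lemma ker_comp_commutator_le {A B G : Type} [Group A] [Group B] [Group G]
    (φ : A →* B) (β : B →* G) :
    ⁅(β.comp φ).ker, (β.comp φ).ker⁆ ≤ (⁅β.ker, β.ker⁆).comap φ := by
  have h : (β.comp φ).ker = β.ker.comap φ := by
    ext x
    simp [MonoidHom.mem_ker]
  rw [h]
  exact commutator_comap_le φ β.ker

end FV

open FV

/-!
Write `α : A →* G` for `β ∘ φ` or `β`. The orbits of `A` on `G` are the right cosets of `im α`,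
each isomorphic to `A / ker α` as an `A`-set, so by Shapiro's lemma `H₀(A; ℤ[G])` is free abelian
on the orbits and `H₁(A; ℤ[G])` is the direct sum over the orbits of `(ker α)ᵃᵇ`. Both
identifications are made explicit on chains by a transversal of the orbits and its Schreier
cocycle with values in `ker α`; in degree one the inverse comes from a chain map homotopic to the
identity. Under them, `φ_*` becomes in degree zero the map of orbit sets induced by
`im (β ∘ φ) ≤ im β`, injective exactly when the images agree, and in degree one a reindexing
along that map, twisted by conjugations, of `(ker (β ∘ φ))ᵃᵇ → (ker β)ᵃᵇ` on each summand.
Once the images agree, `A/[ker (β ∘ φ), ker (β ∘ φ)]` and `B/[ker β, ker β]` are extensions of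
the same group by these abelianized kernels, and the five lemma compares the two maps.
-/

namespace FV

lemma bijective_iff_of_comp_eq_comp {X Y Z W : Type*} {f : Y → W} {g : X → Z} {e₁ : X → Y}
    {e₂ : Z → W} (he₁ : e₁.Bijective) (he₂ : e₂.Bijective) (h : f ∘ e₁ = e₂ ∘ g) :
    f.Bijective ↔ g.Bijective := by
  rw [← Function.Bijective.of_comp_iff f he₁, h, Function.Bijective.of_comp_iff' he₂]

lemma mapDomain_injective_iff {X Y M : Type*} [AddCommMonoid M] [Nontrivial M] (f : X → Y) :
    (Finsupp.mapDomain f : (X →₀ M) → (Y →₀ M)).Injective ↔ f.Injective := by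
  refine ⟨fun h x x' hx => ?_, Finsupp.mapDomain_injective⟩
  obtain ⟨m, hm⟩ := exists_ne (0 : M)
  exact Finsupp.single_left_injective hm (h (by simp [Finsupp.mapDomain_single, hx]))

lemma mapRange_bijective_iff {S V W : Type*} [Nonempty S] [AddCommMonoid V] [AddCommMonoid W]
    (f : V →+ W) :
    Function.Bijective (Finsupp.mapRange.addMonoidHom (ι := S) f) ↔ Function.Bijective f := by
  refine ⟨fun h => ?_, Finsupp.mapRange_bijective f (map_zero f)⟩
  obtain ⟨s⟩ := ‹Nonempty S›
  refine ⟨fun v w hvw => Finsupp.single_injective s (h.1 (by simp [hvw])), fun w => ?_⟩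
  obtain ⟨x, hx⟩ := h.2 (Finsupp.single s w)
  exact ⟨x s, by simpa using congr($hx s)⟩

lemma bijective_liftAddHom_single {S T V W : Type*} [AddCommMonoid V] [AddCommMonoid W]
    {e : S → T} (he : e.Bijective) (f : S → V ≃+ W) :
    Function.Bijective
      (Finsupp.liftAddHom fun s => (Finsupp.singleAddHom (e s)).comp (f s).toAddMonoidHom) := by
  let e' := Equiv.ofBijective e he
  let inv : (T →₀ W) →+ (S →₀ V) := Finsupp.liftAddHom fun t =>
    (Finsupp.singleAddHom (e'.symm t)).comp (f (e'.symm t)).symm.toAddMonoidHom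
  refine Function.bijective_iff_has_inverse.mpr ⟨inv, fun v => ?_, fun w => ?_⟩
  · refine DFunLike.congr_fun (?_ : inv.comp (Finsupp.liftAddHom _) = .id _) v
    exact Finsupp.addHom_ext fun _ _ => by simp [inv, e']
  · refine DFunLike.congr_fun (?_ : (Finsupp.liftAddHom _).comp inv = .id _) w
    exact Finsupp.addHom_ext fun _ _ => by simp [inv, e', Equiv.ofBijective_apply_symm_apply]

lemma addHom_ext_single_single {X Y N : Type*} [AddCommMonoid N]
    {f f' : (X →₀ Y →₀ ℤ) →+ N}
    (h : ∀ x y z, f (Finsupp.single x (Finsupp.single y z))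
      = f' (Finsupp.single x (Finsupp.single y z))) : f = f' :=
  Finsupp.addHom_ext' fun x => Finsupp.addHom_ext (h x)

lemma addHom_ext_single_of {S H N : Type*} [Group H] [AddMonoid N]
    {f f' : (S →₀ Additive (Abelianization H)) →+ N}
    (h : ∀ s (k : H), f (Finsupp.single s (Additive.ofMul (Abelianization.of k)))
      = f' (Finsupp.single s (Additive.ofMul (Abelianization.of k)))) : f = f' :=
  Finsupp.addHom_ext fun s x =>
    QuotientGroup.induction_on (C := fun y => f (Finsupp.single s (Additive.ofMul y))
      = f' (Finsupp.single s (Additive.ofMul y))) (Additive.toMul x) (h s)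

lemma abelianization_of_surjective (H : Type*) [Group H] :
    Function.Surjective (Abelianization.of : H →* Abelianization H) :=
  QuotientGroup.mk_surjective

lemma abelianization_of_eq_of_iff {H : Type*} [Group H] {K : Subgroup H} (k k' : K) :
    Abelianization.of k = Abelianization.of k' ↔ (k : H)⁻¹ * k' ∈ ⁅K, K⁆ := by
  refine QuotientGroup.eq.trans ?_
  rw [← K.map_subtype_commutator]
  exact (Subgroup.mem_map_iff_mem K.subtype_injective).symm

lemma abelianization_of_eq_one_iff {H : Type*} [Group H] {K : Subgroup H} (k : K) :
    Abelianization.of k = 1 ↔ (k : H) ∈ ⁅K, K⁆ := by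
  rw [← map_one Abelianization.of, abelianization_of_eq_of_iff, OneMemClass.coe_one, mul_one,
    inv_mem_iff]

section Orbits

variable {A G : Type} [Group A] [Group G] (α : A →* G)

abbrev Orbits := MulAction.orbitRel.Quotient α.range G

variable {α} in
lemma orbit_mk_eq_iff {g g' : G} :
    (⟦g⟧ : Orbits α) = ⟦g'⟧ ↔ ∃ a : A, α a * g' = g := by
  rw [Quotient.eq, MulAction.orbitRel_apply, MulAction.mem_orbit_iff]
  constructor
  · rintro ⟨⟨_, a, rfl⟩, h⟩
    exact ⟨a, h⟩
  · rintro ⟨a, h⟩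
    exact ⟨⟨α a, a, rfl⟩, h⟩

lemma orbit_mk_inv_mul (a : A) (g : G) : (⟦(α a)⁻¹ * g⟧ : Orbits α) = ⟦g⟧ :=
  orbit_mk_eq_iff.mpr ⟨a⁻¹, by rw [map_inv]⟩

def orbitRep (g : G) : G := (⟦g⟧ : Orbits α).out

lemma orbitRep_out (c : Orbits α) : orbitRep α c.out = c.out := by
  rw [orbitRep, Quotient.out_eq]

lemma orbitRep_inv_mul (a : A) (g : G) : orbitRep α ((α a)⁻¹ * g) = orbitRep α g := by
  rw [orbitRep, orbit_mk_inv_mul, orbitRep]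

open scoped Classical in
def toOrbitRep (g : G) : A :=
  if g = orbitRep α g then 1 else
    (orbit_mk_eq_iff.mp (Quotient.out_eq (⟦g⟧ : Orbits α))).choose

lemma map_toOrbitRep_mul (g : G) : α (toOrbitRep α g) * g = orbitRep α g := by
  unfold toOrbitRep
  split_ifs with h
  · rw [map_one, one_mul]
    exact h
  · exact (orbit_mk_eq_iff.mp (Quotient.out_eq (⟦g⟧ : Orbits α))).choose_spec

lemma toOrbitRep_out (c : Orbits α) : toOrbitRep α c.out = 1 := by
  rw [toOrbitRep, if_pos (orbitRep_out α c).symm]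

/-- The Schreier cocycle of the transversal `toOrbitRep α` of the orbits. -/
def kerCocycle (a : A) (g : G) : α.ker :=
  ⟨toOrbitRep α g * a * (toOrbitRep α ((α a)⁻¹ * g))⁻¹, by
    have ht := map_toOrbitRep_mul α ((α a)⁻¹ * g)
    rw [orbitRep_inv_mul, ← map_toOrbitRep_mul α g, ← mul_assoc] at ht
    rw [MonoidHom.mem_ker, map_mul, map_mul, map_inv, ← mul_right_cancel ht]
    group⟩

lemma coe_kerCocycle (a : A) (g : G) :
    (kerCocycle α a g : A) = toOrbitRep α g * a * (toOrbitRep α ((α a)⁻¹ * g))⁻¹ := rfl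

lemma kerCocycle_mul (a₁ a₂ : A) (g : G) :
    kerCocycle α a₁ g * kerCocycle α a₂ ((α a₁)⁻¹ * g) = kerCocycle α (a₁ * a₂) g := by
  ext
  simp only [Subgroup.coe_mul, coe_kerCocycle, map_mul, mul_inv_rev, mul_assoc]
  group

lemma kerCocycle_out (k : α.ker) (c : Orbits α) : kerCocycle α k c.out = k := by
  ext
  simp [coe_kerCocycle, MonoidHom.mem_ker.mp k.2, toOrbitRep_out]

end Orbits

section GroupRing

variable {A G : Type} [Group A] [Group G] (α : A →* G)

abbrev groupRingRep : Rep A (G →₀ ℤ) := (permRep G G).comp α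

lemma groupRingRep_single (a : A) (g : G) (z : ℤ) :
    groupRingRep α a (Finsupp.single g z) = Finsupp.single (α a * g) z := by
  simp [permRep, Finsupp.domCongr_apply]

lemma groupRingRep_inv_single (a : A) (g : G) (z : ℤ) :
    (groupRingRep α a)⁻¹ (Finsupp.single g z) = Finsupp.single ((α a)⁻¹ * g) z := by
  rw [← map_inv, groupRingRep_single, map_inv]

lemma d1_single (a : A) (g : G) (z : ℤ) :
    d1 (groupRingRep α) (Finsupp.single a (Finsupp.single g z))
      = Finsupp.single ((α a)⁻¹ * g) z - Finsupp.single g z := by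
  simp only [d1, Finsupp.liftAddHom_apply_single, AddMonoidHom.sub_apply, AddMonoidHom.id_apply,
    AddEquiv.coe_toAddMonoidHom, map_inv, groupRingRep_inv_single]

lemma d2_single (a₁ a₂ : A) (g : G) (z : ℤ) :
    d2 (groupRingRep α) (Finsupp.single (a₁, a₂) (Finsupp.single g z))
      = Finsupp.single a₂ (Finsupp.single ((α a₁)⁻¹ * g) z)
        - Finsupp.single (a₁ * a₂) (Finsupp.single g z)
        + Finsupp.single a₁ (Finsupp.single g z) := by
  simp only [d2, Finsupp.liftAddHom_apply_single, AddMonoidHom.sub_apply, AddMonoidHom.add_apply,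
    AddMonoidHom.comp_apply, Finsupp.singleAddHom_apply, AddEquiv.coe_toAddMonoidHom,
    map_inv, groupRingRep_inv_single]

lemma d1_single_ker (k : α.ker) (g : G) (z : ℤ) :
    d1 (groupRingRep α) (Finsupp.single (k : A) (Finsupp.single g z)) = 0 := by
  simp [d1_single, MonoidHom.mem_ker.mp k.2]

end GroupRing

section H0

variable {A B G : Type} [Group A] [Group B] [Group G] (α : A →* G)

lemma mk_single_orbitRep (g : G) (z : ℤ) :
    QuotientAddGroup.mk' (d1 (groupRingRep α)).range (Finsupp.single (orbitRep α g) z)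
      = QuotientAddGroup.mk' _ (Finsupp.single g z) := by
  rw [QuotientAddGroup.mk'_eq_mk']
  refine ⟨Finsupp.single g z - Finsupp.single (orbitRep α g) z,
    ⟨Finsupp.single (toOrbitRep α g) (Finsupp.single (orbitRep α g) z), ?_⟩, by abel⟩
  rw [d1_single, ← map_toOrbitRep_mul α g, inv_mul_cancel_left]

def orbitsToH0 : (Orbits α →₀ ℤ) →+ H0 (groupRingRep α) :=
  Finsupp.liftAddHom fun c => (QuotientAddGroup.mk' _).comp (Finsupp.singleAddHom c.out)

lemma orbitsToH0_single (c : Orbits α) (z : ℤ) :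
    orbitsToH0 α (Finsupp.single c z) = QuotientAddGroup.mk' _ (Finsupp.single c.out z) := by
  simp [orbitsToH0]

lemma mapDomain_orbit_mk_comp_d1 :
    (Finsupp.mapDomain.addMonoidHom (⟦·⟧ : G → Orbits α)).comp (d1 (groupRingRep α)) = 0 :=
  addHom_ext_single_single fun a g z => by
    simp only [AddMonoidHom.comp_apply, d1_single, map_sub, Finsupp.mapDomain.addMonoidHom_apply,
      Finsupp.mapDomain_single, orbit_mk_inv_mul, sub_self, AddMonoidHom.zero_apply]

def H0ToOrbits : H0 (groupRingRep α) →+ (Orbits α →₀ ℤ) :=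
  QuotientAddGroup.lift _ (Finsupp.mapDomain.addMonoidHom (⟦·⟧ : G → Orbits α)) <| by
    rintro _ ⟨x, rfl⟩
    exact DFunLike.congr_fun (mapDomain_orbit_mk_comp_d1 α) x

lemma H0ToOrbits_comp_orbitsToH0 :
    (H0ToOrbits α).comp (orbitsToH0 α) = AddMonoidHom.id _ :=
  Finsupp.addHom_ext fun c z => by
    simp [orbitsToH0_single, H0ToOrbits, Finsupp.mapDomain_single]

lemma orbitsToH0_comp_mapDomain_orbit_mk :
    (orbitsToH0 α).comp (Finsupp.mapDomain.addMonoidHom (⟦·⟧ : G → Orbits α))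
      = QuotientAddGroup.mk' _ :=
  Finsupp.addHom_ext fun g z => by
    rw [AddMonoidHom.comp_apply, Finsupp.mapDomain.addMonoidHom_apply, Finsupp.mapDomain_single,
      orbitsToH0_single]
    exact mk_single_orbitRep α g z

lemma orbitsToH0_bijective : Function.Bijective (orbitsToH0 α) := by
  refine ⟨Function.LeftInverse.injective (g := H0ToOrbits α)
    (DFunLike.congr_fun (H0ToOrbits_comp_orbitsToH0 α)), fun q => ?_⟩
  obtain ⟨m, rfl⟩ := QuotientAddGroup.mk'_surjective _ q
  exact ⟨_, DFunLike.congr_fun (orbitsToH0_comp_mapDomain_orbit_mk α) m⟩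

variable (φ : A →* B) (β : B →* G)

def orbitMap : Orbits (β.comp φ) → Orbits β :=
  Quotient.lift (⟦·⟧) fun _ _ h => by
    obtain ⟨a, ha⟩ := orbit_mk_eq_iff.mp (Quotient.sound h)
    exact orbit_mk_eq_iff.mpr ⟨φ a, ha⟩

lemma orbitMap_surjective : Function.Surjective (orbitMap φ β) :=
  Quotient.ind fun g => ⟨⟦g⟧, rfl⟩

lemma orbitMap_injective_iff :
    Function.Injective (orbitMap φ β) ↔ (β.comp φ).range = β.range := by
  constructor
  · intro h
    refine le_antisymm (fun _ ⟨a, ha⟩ => ⟨φ a, ha⟩) fun _ ⟨b, hb⟩ => ?_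
    have hb' : orbitMap φ β ⟦β b⟧ = orbitMap φ β ⟦1⟧ := orbit_mk_eq_iff.mpr ⟨b, by rw [mul_one]⟩
    obtain ⟨a, ha⟩ := orbit_mk_eq_iff.mp (h hb')
    exact ⟨a, by rw [← hb, ← ha, mul_one]⟩
  · intro hr
    refine Quotient.ind₂ fun g g' hg => ?_
    obtain ⟨b, hb⟩ := orbit_mk_eq_iff.mp hg
    obtain ⟨a, ha⟩ : β b ∈ (β.comp φ).range := hr ▸ ⟨b, rfl⟩
    exact orbit_mk_eq_iff.mpr ⟨a, by rw [ha, hb]⟩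

lemma orbitMap_out (c : Orbits (β.comp φ)) : (orbitMap φ β c).out = orbitRep β c.out := by
  conv_lhs => rw [← Quotient.out_eq c]
  rfl

lemma H0Map_comp_orbitsToH0 :
    (H0Map φ (groupRingRep β)).comp (orbitsToH0 (β.comp φ))
      = (orbitsToH0 β).comp (Finsupp.mapDomain.addMonoidHom (orbitMap φ β)) :=
  Finsupp.addHom_ext fun c z => by
    rw [AddMonoidHom.comp_apply, orbitsToH0_single, AddMonoidHom.comp_apply,
      Finsupp.mapDomain.addMonoidHom_apply, Finsupp.mapDomain_single, orbitsToH0_single,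
      orbitMap_out, mk_single_orbitRep]
    rfl

lemma H0Map_bijective_iff :
    Function.Bijective (H0Map φ (groupRingRep β)) ↔ (β.comp φ).range = β.range := by
  have h := congrArg DFunLike.coe (H0Map_comp_orbitsToH0 φ β)
  rw [AddMonoidHom.coe_comp, AddMonoidHom.coe_comp] at h
  rw [bijective_iff_of_comp_eq_comp (orbitsToH0_bijective (β.comp φ)) (orbitsToH0_bijective β) h,
    ← orbitMap_injective_iff, ← mapDomain_injective_iff (M := ℤ)]
  exact and_iff_left (Finsupp.mapDomain_surjective (orbitMap_surjective φ β))

end H0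

abbrev H1.mk {A M : Type} [Group A] [AddCommGroup M] (ρ : Rep A M) : Z1 ρ →+ H1 ρ :=
  QuotientAddGroup.mk' _

lemma H1.mk_eq_mk_of_eq_add_d2 {A M : Type} [Group A] [AddCommGroup M] {ρ : Rep A M}
    {x y : Z1 ρ} (w : A × A →₀ M) (h : (x : A →₀ M) = y + d2 ρ w) : H1.mk ρ x = H1.mk ρ y := by
  rw [QuotientAddGroup.mk'_eq_mk']
  refine ⟨y - x, AddSubgroup.mem_addSubgroupOf.mpr ⟨-w, ?_⟩, add_sub_cancel x y⟩
  rw [map_neg, AddSubgroup.coe_sub, h]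
  abel

section H1

variable {A G : Type} [Group A] [Group G] (α : A →* G)

def kerCycle (k : α.ker) (g : G) : Z1 (groupRingRep α) :=
  ⟨Finsupp.single (k : A) (Finsupp.single g 1), d1_single_ker α k g 1⟩

lemma kerCycle_conj (b : A) (k : α.ker) (g : G) :
    H1.mk _ (kerCycle α (MulAut.conjNormal b k) (α b * g)) = H1.mk _ (kerCycle α k g) := by
  refine H1.mk_eq_mk_of_eq_add_d2 (Finsupp.single ((MulAut.conjNormal b k : A), b)
    (Finsupp.single (α b * g) 1) - Finsupp.single (b, (k : A)) (Finsupp.single (α b * g) 1)) ?_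
  have hk : α k = 1 := k.2
  simp only [kerCycle, map_sub, d2_single, MulAut.conjNormal_apply, map_mul, map_inv, hk,
    mul_one, mul_inv_cancel, inv_one, one_mul, inv_mul_cancel_left, inv_mul_cancel_right]
  abel

lemma kerCycle_mul (k₁ k₂ : α.ker) (g : G) :
    H1.mk _ (kerCycle α (k₁ * k₂) g) = H1.mk _ (kerCycle α k₁ g) + H1.mk _ (kerCycle α k₂ g) := by
  rw [← map_add]
  refine H1.mk_eq_mk_of_eq_add_d2
    (-Finsupp.single ((k₁ : A), (k₂ : A)) (Finsupp.single g (1 : ℤ))) ?_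
  have hk : α k₁ = 1 := k₁.2
  simp only [kerCycle, AddSubgroup.coe_add, map_neg, d2_single, hk, inv_one, one_mul,
    Subgroup.coe_mul]
  abel

def kerCycleHom (g : G) : α.ker →* Multiplicative (H1 (groupRingRep α)) :=
  MonoidHom.mk' (fun k => Multiplicative.ofAdd (H1.mk _ (kerCycle α k g))) fun k₁ k₂ =>
    congrArg Multiplicative.ofAdd (kerCycle_mul α k₁ k₂ g)

abbrev OrbitKerAb := Orbits α →₀ Additive (Abelianization α.ker)

def orbitKerAbToH1 : OrbitKerAb α →+ H1 (groupRingRep α) :=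
  Finsupp.liftAddHom fun c => MonoidHom.toAdditiveLeft (Abelianization.lift (kerCycleHom α c.out))

lemma orbitKerAbToH1_single (c : Orbits α) (k : α.ker) :
    orbitKerAbToH1 α (Finsupp.single c (Additive.ofMul (Abelianization.of k)))
      = H1.mk _ (kerCycle α k c.out) := by
  simp only [orbitKerAbToH1, Finsupp.liftAddHom_apply_single]
  rfl

def toOrbitKerAb : (A →₀ G →₀ ℤ) →+ OrbitKerAb α :=
  Finsupp.liftAddHom fun a => Finsupp.liftAddHom fun g =>
    zmultiplesHom _ (Finsupp.single ⟦g⟧ (Additive.ofMul (Abelianization.of (kerCocycle α a g))))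

lemma toOrbitKerAb_single (a : A) (g : G) (z : ℤ) :
    toOrbitKerAb α (Finsupp.single a (Finsupp.single g z))
      = z • Finsupp.single ⟦g⟧ (Additive.ofMul (Abelianization.of (kerCocycle α a g))) := by
  simp only [toOrbitKerAb, Finsupp.liftAddHom_apply_single, zmultiplesHom_apply]

lemma toOrbitKerAb_comp_d2 : (toOrbitKerAb α).comp (d2 (groupRingRep α)) = 0 :=
  addHom_ext_single_single fun ⟨a₁, a₂⟩ g z => by
    simp only [AddMonoidHom.comp_apply, AddMonoidHom.zero_apply, d2_single, map_sub, map_add,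
      toOrbitKerAb_single, orbit_mk_inv_mul, ← kerCocycle_mul α a₁ a₂ g, map_mul, ofMul_mul,
      Finsupp.single_add, smul_add]
    abel

def H1ToOrbitKerAb : H1 (groupRingRep α) →+ OrbitKerAb α :=
  QuotientAddGroup.lift _ ((toOrbitKerAb α).comp (Z1 _).subtype) fun _ hx => by
    obtain ⟨w, hw⟩ := AddSubgroup.mem_addSubgroupOf.mp hx
    rw [AddMonoidHom.mem_ker, AddMonoidHom.comp_apply, AddSubgroup.coe_subtype, ← hw]
    exact DFunLike.congr_fun (toOrbitKerAb_comp_d2 α) w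

lemma H1ToOrbitKerAb_comp_orbitKerAbToH1 :
    (H1ToOrbitKerAb α).comp (orbitKerAbToH1 α) = AddMonoidHom.id _ :=
  addHom_ext_single_of fun c k => by
    rw [AddMonoidHom.comp_apply, orbitKerAbToH1_single]
    show toOrbitKerAb α (Finsupp.single (k : A) (Finsupp.single c.out 1)) = _
    rw [toOrbitKerAb_single, one_smul, Quotient.out_eq, kerCocycle_out]
    rfl

end H1

section Normalize

variable {A G : Type} [Group A] [Group G] (α : A →* G)

def normalize : (A →₀ G →₀ ℤ) →+ (A →₀ G →₀ ℤ) :=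
  Finsupp.liftAddHom fun a => Finsupp.liftAddHom fun g =>
    (Finsupp.singleAddHom (kerCocycle α a g : A)).comp (Finsupp.singleAddHom (orbitRep α g))

lemma normalize_single (a : A) (g : G) (z : ℤ) :
    normalize α (Finsupp.single a (Finsupp.single g z))
      = Finsupp.single (kerCocycle α a g : A) (Finsupp.single (orbitRep α g) z) := by
  simp only [normalize, Finsupp.liftAddHom_apply_single, AddMonoidHom.comp_apply,
    Finsupp.singleAddHom_apply]

def homotopy₀ : (G →₀ ℤ) →+ (A →₀ G →₀ ℤ) :=
  Finsupp.liftAddHom fun g =>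
    (Finsupp.singleAddHom (toOrbitRep α g)).comp (Finsupp.singleAddHom (orbitRep α g))

def homotopy₁ : (A →₀ G →₀ ℤ) →+ (A × A →₀ G →₀ ℤ) :=
  Finsupp.liftAddHom fun a => Finsupp.liftAddHom fun g =>
    AddMonoidHom.comp (Finsupp.singleAddHom (toOrbitRep α g, a)
      - Finsupp.singleAddHom ((kerCocycle α a g : A), toOrbitRep α ((α a)⁻¹ * g)))
      (Finsupp.singleAddHom (orbitRep α g))

lemma normalize_add_homotopy :
    normalize α + (homotopy₀ α).comp (d1 (groupRingRep α))
      + (d2 (groupRingRep α)).comp (homotopy₁ α) = AddMonoidHom.id _ :=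
  addHom_ext_single_single fun a g z => by
    have hrep : (α (toOrbitRep α g))⁻¹ * orbitRep α g = g := by
      rw [← map_toOrbitRep_mul, inv_mul_cancel_left]
    have hk : α (kerCocycle α a g) = 1 := (kerCocycle α a g).2
    have hmul : (kerCocycle α a g : A) * toOrbitRep α ((α a)⁻¹ * g) = toOrbitRep α g * a := by
      rw [coe_kerCocycle, inv_mul_cancel_right]
    simp only [normalize_single, homotopy₀, homotopy₁, AddMonoidHom.add_apply,
      AddMonoidHom.comp_apply, AddMonoidHom.sub_apply, AddMonoidHom.id_apply, Finsupp.liftAddHom_apply_single,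
      Finsupp.singleAddHom_apply, d1_single, d2_single, map_sub, hrep, hk, hmul, inv_one, one_mul,
      orbitRep_inv_mul]
    abel

lemma d1_comp_normalize : (d1 (groupRingRep α)).comp (normalize α) = 0 :=
  addHom_ext_single_single fun a g z => by
    rw [AddMonoidHom.comp_apply, normalize_single, d1_single_ker, AddMonoidHom.zero_apply]

def normalizeZ1 : (A →₀ G →₀ ℤ) →+ Z1 (groupRingRep α) :=
  (normalize α).codRestrict _ fun x => DFunLike.congr_fun (d1_comp_normalize α) x

lemma mk_normalizeZ1 (x : Z1 (groupRingRep α)) : H1.mk _ (normalizeZ1 α x) = H1.mk _ x := by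
  refine (H1.mk_eq_mk_of_eq_add_d2 (homotopy₁ α x) ?_).symm
  have h := DFunLike.congr_fun (normalize_add_homotopy α) (x : A →₀ G →₀ ℤ)
  have hx : d1 (groupRingRep α) x = 0 := x.2
  simp only [AddMonoidHom.add_apply, AddMonoidHom.comp_apply, AddMonoidHom.id_apply, hx,
    map_zero, add_zero] at h
  exact h.symm

lemma orbitKerAbToH1_comp_toOrbitKerAb :
    (orbitKerAbToH1 α).comp (toOrbitKerAb α) = (H1.mk _).comp (normalizeZ1 α) :=
  addHom_ext_single_single fun a g z => by
    have h : normalizeZ1 α (Finsupp.single a (Finsupp.single g z))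
        = z • kerCycle α (kerCocycle α a g) (orbitRep α g) := by
      ext1
      rw [AddSubgroup.coe_zsmul]
      exact (normalize_single α a g z).trans (by simp [kerCycle, Finsupp.smul_single])
    rw [AddMonoidHom.comp_apply, AddMonoidHom.comp_apply, toOrbitKerAb_single, map_zsmul,
      orbitKerAbToH1_single, h, map_zsmul]
    rfl

lemma orbitKerAbToH1_bijective : Function.Bijective (orbitKerAbToH1 α) := by
  refine ⟨Function.LeftInverse.injective (g := H1ToOrbitKerAb α)
    (DFunLike.congr_fun (H1ToOrbitKerAb_comp_orbitKerAbToH1 α)), fun q => ?_⟩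
  obtain ⟨x, rfl⟩ := QuotientAddGroup.mk'_surjective _ q
  exact ⟨toOrbitKerAb α x, (DFunLike.congr_fun (orbitKerAbToH1_comp_toOrbitKerAb α)
    (x : A →₀ G →₀ ℤ)).trans (mk_normalizeZ1 α x)⟩

end Normalize

section Comparison

variable {A B G : Type} [Group A] [Group B] [Group G] (φ : A →* B) (β : B →* G)

def kerRestrict : (β.comp φ).ker →* β.ker :=
  (φ.comp (β.comp φ).ker.subtype).codRestrict β.ker fun k => k.2

def kerAbMap : Abelianization (β.comp φ).ker →* Abelianization β.ker :=
  Abelianization.map (kerRestrict φ β)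

/-- On the summand of an orbit `c`, conjugation by `toOrbitRep β c.out` accounts for the
different orbit representatives chosen for `β ∘ φ` and for `β`. -/
def orbitKerAbMap : OrbitKerAb (β.comp φ) →+ OrbitKerAb β :=
  (Finsupp.liftAddHom fun c => (Finsupp.singleAddHom (orbitMap φ β c)).comp
      (MulEquiv.toAdditive (MulAut.conjNormal (toOrbitRep β c.out)).abelianizationCongr
        ).toAddMonoidHom).comp
    (Finsupp.mapRange.addMonoidHom (MonoidHom.toAdditive (kerAbMap φ β)))

lemma H1Map_mk_kerCycle (k : (β.comp φ).ker) (g : G) :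
    H1Map φ (groupRingRep β) (H1.mk (groupRingRep (β.comp φ)) (kerCycle (β.comp φ) k g))
      = H1.mk _ (kerCycle β (kerRestrict φ β k) g) :=
  congrArg (H1.mk _) (Subtype.ext Finsupp.mapDomain_single)

lemma H1Map_comp_orbitKerAbToH1 :
    (H1Map φ (groupRingRep β)).comp (orbitKerAbToH1 (β.comp φ))
      = (orbitKerAbToH1 β).comp (orbitKerAbMap φ β) :=
  addHom_ext_single_of fun c k => by
    rw [AddMonoidHom.comp_apply, orbitKerAbToH1_single, H1Map_mk_kerCycle, AddMonoidHom.comp_apply]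
    have h : orbitKerAbMap φ β (Finsupp.single c (Additive.ofMul (Abelianization.of k)))
        = Finsupp.single (orbitMap φ β c) (Additive.ofMul (Abelianization.of
            (MulAut.conjNormal (toOrbitRep β c.out) (kerRestrict φ β k)))) := by
      simp [orbitKerAbMap, kerAbMap]
    rw [h, orbitKerAbToH1_single, orbitMap_out, ← map_toOrbitRep_mul, kerCycle_conj]

lemma H1Map_bijective_iff (hr : (β.comp φ).range = β.range) :
    Function.Bijective (H1Map φ (groupRingRep β)) ↔ Function.Bijective (kerAbMap φ β) := by
  have h := congrArg DFunLike.coe (H1Map_comp_orbitKerAbToH1 φ β)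
  rw [AddMonoidHom.coe_comp, AddMonoidHom.coe_comp] at h
  rw [bijective_iff_of_comp_eq_comp (orbitKerAbToH1_bijective (β.comp φ))
    (orbitKerAbToH1_bijective β) h, orbitKerAbMap, AddMonoidHom.coe_comp,
    Function.Bijective.of_comp_iff' (bijective_liftAddHom_single
      ⟨(orbitMap_injective_iff φ β).mpr hr, orbitMap_surjective φ β⟩ _)]
  have : Nonempty (Orbits (β.comp φ)) := ⟨⟦1⟧⟩
  exact mapRange_bijective_iff _

end Comparison

section KernelAbelianization

variable {A B G : Type} [Group A] [Group B] [Group G] (φ : A →* B) (β : B →* G)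

lemma kerAbMap_of (k : (β.comp φ).ker) :
    kerAbMap φ β (Abelianization.of k) = Abelianization.of (kerRestrict φ β k) := rfl

lemma quotientKerCommutatorMap_injective_iff :
    Function.Injective (QuotientGroup.map _ _ φ (ker_comp_commutator_le φ β))
      ↔ Function.Injective (kerAbMap φ β) := by
  simp only [injective_iff_map_eq_one]
  constructor
  · intro h x hx
    obtain ⟨k, rfl⟩ := abelianization_of_surjective _ x
    rw [kerAbMap_of, abelianization_of_eq_one_iff] at hx
    rw [abelianization_of_eq_one_iff, ← QuotientGroup.eq_one_iff]
    exact h _ ((QuotientGroup.eq_one_iff _).mpr hx)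
  · intro h x hx
    obtain ⟨a, rfl⟩ := QuotientGroup.mk_surjective x
    rw [QuotientGroup.map_mk, QuotientGroup.eq_one_iff] at hx
    have ha : a ∈ (β.comp φ).ker := Subgroup.commutator_le_left β.ker β.ker hx
    rw [QuotientGroup.eq_one_iff, ← abelianization_of_eq_one_iff (k := ⟨a, ha⟩)]
    exact h _ ((abelianization_of_eq_one_iff _).mpr hx)

lemma quotientKerCommutatorMap_surjective_iff (hr : (β.comp φ).range = β.range) :
    Function.Surjective (QuotientGroup.map _ _ φ (ker_comp_commutator_le φ β))
      ↔ Function.Surjective (kerAbMap φ β) := by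
  constructor
  · intro h y
    obtain ⟨k', rfl⟩ := abelianization_of_surjective _ y
    obtain ⟨x, hx⟩ := h (k' : B)
    obtain ⟨a, rfl⟩ := QuotientGroup.mk_surjective x
    rw [QuotientGroup.map_mk, QuotientGroup.eq] at hx
    have ha : a ∈ (β.comp φ).ker := by
      have hk : β ((φ a)⁻¹ * k') = 1 := Subgroup.commutator_le_left β.ker β.ker hx
      rwa [map_mul, map_inv, k'.2, mul_one, inv_eq_one] at hk
    exact ⟨Abelianization.of ⟨a, ha⟩, (abelianization_of_eq_of_iff _ _).mpr hx⟩
  · intro h y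
    obtain ⟨b, rfl⟩ := QuotientGroup.mk_surjective y
    obtain ⟨a, ha⟩ : β b ∈ (β.comp φ).range := hr ▸ ⟨b, rfl⟩
    have hk' : (φ a)⁻¹ * b ∈ β.ker := by
      rw [MonoidHom.mem_ker, map_mul, map_inv, ← MonoidHom.comp_apply, ha, inv_mul_cancel]
    obtain ⟨x, hx⟩ := h (Abelianization.of ⟨_, hk'⟩)
    obtain ⟨k, rfl⟩ := abelianization_of_surjective _ x
    rw [kerAbMap_of, abelianization_of_eq_of_iff] at hx
    refine ⟨(a * k : A), ?_⟩
    rw [QuotientGroup.map_mk, QuotientGroup.eq, map_mul, mul_inv_rev, mul_assoc]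
    exact hx

lemma quotientKerCommutatorMap_bijective_iff (hr : (β.comp φ).range = β.range) :
    Function.Bijective (QuotientGroup.map _ _ φ (ker_comp_commutator_le φ β))
      ↔ Function.Bijective (kerAbMap φ β) :=
  and_congr (quotientKerCommutatorMap_injective_iff φ β)
    (quotientKerCommutatorMap_surjective_iff φ β hr)

end KernelAbelianization

end FV

theorem stmt4_general (A B G : Type) [Group A] [Group B] [Group G] (φ : A →* B) (β : B →* G) :
    (Function.Bijective (H0Map φ ((permRep G G).comp β)) ∧
      Function.Bijective (H1Map φ ((permRep G G).comp β))) ↔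
    ((β.comp φ).range = β.range ∧
      Function.Bijective
        (QuotientGroup.map ⁅(β.comp φ).ker, (β.comp φ).ker⁆ ⁅β.ker, β.ker⁆ φ
          (ker_comp_commutator_le φ β))) := by
  rw [H0Map_bijective_iff]
  refine and_congr_right fun hr => ?_
  rw [H1Map_bijective_iff φ β hr, quotientKerCommutatorMap_bijective_iff φ β hr]

/-- For a monomorphism `φ : A → B` of finitely generated groups and
`β : B → G` with `G` finite, the induced maps `φ⁎ : H_j(A; ℤ[G]) → H_j(B; ℤ[G])` are
bijective for `j = 0, 1` iff `im (β ∘ φ) = im β` and `φ` induces an isomorphism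
`A/[ker (β∘φ), ker (β∘φ)] → B/[ker β, ker β]`. -/
theorem stmt4 (A B G : Type) [Group A] [Group.FG A] [Group B] [Group.FG B]
    [Group G] [Finite G]
    (φ : A →* B) (hφ : Function.Injective φ) (β : B →* G) :
    (Function.Bijective (H0Map φ ((permRep G G).comp β)) ∧
      Function.Bijective (H1Map φ ((permRep G G).comp β))) ↔
    ((β.comp φ).range = β.range ∧
      Function.Bijective
        (QuotientGroup.map ⁅(β.comp φ).ker, (β.comp φ).ker⁆ ⁅β.ker, β.ker⁆ φ
          (ker_comp_commutator_le φ β))) :=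
  stmt4_general A B G φ β
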